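/- arXiv:1204.2282 — 2 statements merged into one kernel-verified Lean document; each statement's English description precedes it below -/
import Mathlib

section
/- For all integers $j \geq 0$, $m \geq 0$ and real $\alpha$, the type I exceptional Laguerre polynomial satisfies the representation $\hat{L}^{I,\alpha}_{m,m+j}(x) = L^{\alpha}_m(-x) L^{\alpha}_j(x) - L^{\alpha}_{m-1}(-x) L^{\alpha}_{j-1}(x)$, where $\hat{L}^{I,\alpha}_{m,m+j}(x) := L^{\alpha}_m(-x) L^{\alpha-1}_j(x) + L^{\alpha-1}_m(-x) L^{\alpha}_{j-1}(x)$. -/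
noncomputable def gbinom (x : ℝ) (k : ℕ) : ℝ :=
  (∏ i ∈ Finset.range k, (x - i)) / (Nat.factorial k)

noncomputable def poch (x : ℝ) (k : ℕ) : ℝ := ∏ i ∈ Finset.range k, (x + i)

/-- Classical (associated) Laguerre polynomial `L^α_n(x)`, with `L^α_n = 0` for `n < 0`. -/
noncomputable def lag (α : ℝ) (n : ℤ) (x : ℝ) : ℝ :=
  if n < 0 then 0 else
    ∑ k ∈ Finset.range (n.toNat + 1),
      (-1 : ℝ) ^ k * gbinom ((n : ℝ) + α) (n.toNat - k) * x ^ k / (Nat.factorial k)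

/-!
With `α` lowered by one, Pascal's rule `C(y, r+1) = C(y-1, r+1) + C(y-1, r)` applied coefficientwise
gives `L^{α-1}_n = L^α_n - L^α_{n-1}`. Substituting this for both `L^{α-1}` factors, the two cross terms
`L^α_m(-x) L^α_{j-1}(x)` cancel.
-/

open Finset Nat

lemma gbinom_zero (x : ℝ) : gbinom x 0 = 1 := by
  simp [gbinom]

lemma gbinom_succ (x : ℝ) (r : ℕ) :
    gbinom x (r + 1) = gbinom (x - 1) (r + 1) + gbinom (x - 1) r := by
  have hshift : ∏ i ∈ range (r + 1), (x - i) = (∏ i ∈ range r, (x - 1 - i)) * x := by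
    rw [prod_range_succ']
    simp only [cast_add, cast_one, sub_add_eq_sub_sub, sub_right_comm _ _ (1 : ℝ), cast_zero,
      sub_zero]
  simp only [gbinom, hshift, prod_range_succ, factorial_succ, cast_mul, cast_succ]
  field_simp
  ring

lemma lag_natCast (α : ℝ) (n : ℕ) (x : ℝ) :
    lag α n x = ∑ k ∈ range (n + 1), (-1) ^ k * gbinom (n + α) (n - k) * x ^ k / k ! := by
  simp [lag]

lemma gbinom_natCast_add_sub_one (α : ℝ) {n k : ℕ} (hk : k ≤ n) :
    gbinom ((n + 1 : ℕ) + (α - 1)) (n + 1 - k) =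
      gbinom ((n + 1 : ℕ) + α) (n + 1 - k) - gbinom (n + α) (n - k) := by
  have hshift : ((n + 1 : ℕ) : ℝ) + α - 1 = (n + 1 : ℕ) + (α - 1) := by ring
  have hpred : ((n + 1 : ℕ) : ℝ) + (α - 1) = n + α := by push_cast; ring
  rw [Nat.succ_sub hk, gbinom_succ ((n + 1 : ℕ) + α), hshift, hpred]
  ring

lemma lag_sub_one (α : ℝ) (n : ℕ) (x : ℝ) :
    lag (α - 1) n x = lag α n x - lag α ((n : ℤ) - 1) x := by
  cases n with
  | zero => simp [lag, gbinom_zero]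
  | succ m =>
    have hpred : ((m + 1 : ℕ) : ℤ) - 1 = m := by push_cast; ring
    have hterm : ∀ k ∈ range (m + 1),
        (-1) ^ k * gbinom ((m + 1 : ℕ) + (α - 1)) (m + 1 - k) * x ^ k / k ! =
          (-1) ^ k * gbinom ((m + 1 : ℕ) + α) (m + 1 - k) * x ^ k / (k ! : ℝ) -
            (-1) ^ k * gbinom (m + α) (m - k) * x ^ k / (k ! : ℝ) := fun k hk => by
      rw [gbinom_natCast_add_sub_one α (mem_range_succ_iff.mp hk)]
      ring
    rw [hpred, lag_natCast, lag_natCast, lag_natCast, sum_range_succ _ (m + 1),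
      sum_range_succ _ (m + 1), sum_congr rfl hterm, sum_sub_distrib, Nat.sub_self, gbinom_zero,
      gbinom_zero]
    ring

/-- Representation of the type I exceptional Laguerre polynomial in terms of
classical Laguerre polynomials with the same parameter `α`. -/
theorem xLaguerreI_altrep (j m : ℕ) (α x : ℝ) :
    lag α m (-x) * lag (α - 1) j x + lag (α - 1) m (-x) * lag α ((j : ℤ) - 1) x =
      lag α m (-x) * lag α j x - lag α ((m : ℤ) - 1) (-x) * lag α ((j : ℤ) - 1) x := by
  rw [lag_sub_one α j x, lag_sub_one α m (-x)]
  ring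
end

section
/- For all integers $m \geq 0$, $j \geq 0$ and real $\alpha$, the value of the type II exceptional Laguerre polynomial at the origin is $\hat{L}^{II,\alpha}_{m,m+j}(0) = (m+1)\binom{\alpha+j+1}{j}\binom{m-\alpha-1}{m+1}$. In particular, if $\alpha > m-1$ then $\hat{L}^{II,\alpha}_{m,m+j}(0) \neq 0$. -/
/-- Type II exceptional `X_m`-Laguerre polynomial of degree `m + j`. -/
noncomputable def XLagII (α : ℝ) (m j : ℤ) (x : ℝ) : ℝ :=
  x * lag (-α - 1) m x * lag (α + 2) (j - 1) x
    + ((m : ℝ) - α - 1) * lag (-α - 2) m x * lag (α + 1) j x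

theorem lag_natCast_zero (α : ℝ) (n : ℕ) : lag α n 0 = gbinom (n + α) n := by
  rw [lag, if_neg (by exact_mod_cast n.not_lt_zero), Finset.sum_eq_single 0]
  · simp
  · intro k _ hk
    simp [zero_pow hk]
  · simp

theorem XLagII_natCast_zero (α : ℝ) (m j : ℕ) :
    XLagII α m j 0 = ((m : ℝ) - α - 1) * gbinom (m - α - 2) m * gbinom (α + j + 1) j := by
  simp only [XLagII, Int.cast_natCast, lag_natCast_zero, zero_mul, zero_add]
  ring_nf

theorem succ_mul_gbinom_succ (x : ℝ) (k : ℕ) :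
    (k + 1) * gbinom x (k + 1) = x * gbinom (x - 1) k := by
  have hk : (k.factorial : ℝ) ≠ 0 := by positivity
  simp only [gbinom, Finset.prod_range_succ', Nat.factorial_succ, Nat.cast_mul, Nat.cast_succ,
    Nat.cast_zero, sub_zero, sub_sub]
  field_simp
  ring_nf

theorem gbinom_ne_zero {x : ℝ} {k : ℕ} (h : ∀ i < k, x ≠ i) : gbinom x k ≠ 0 :=
  div_ne_zero (Finset.prod_ne_zero_iff.mpr fun i hi => sub_ne_zero.mpr (h i (Finset.mem_range.mp hi)))
    (by positivity)

/-- Value of the type II exceptional Laguerre polynomial at the origin; in particular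
it is nonzero when `α > m - 1`. -/
theorem xLaguerreII_at_zero (m j : ℕ) (α : ℝ) :
    XLagII α m j 0 = (m + 1) * gbinom (α + j + 1) j * gbinom ((m : ℝ) - α - 1) (m + 1) ∧
      (α > (m : ℝ) - 1 → XLagII α m j 0 ≠ 0) := by
  have value : XLagII α m j 0
      = (m + 1) * gbinom (α + j + 1) j * gbinom ((m : ℝ) - α - 1) (m + 1) := by
    have absorb := succ_mul_gbinom_succ ((m : ℝ) - α - 1) m
    rw [show (m : ℝ) - α - 1 - 1 = m - α - 2 by ring] at absorb
    rw [XLagII_natCast_zero]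
    linear_combination -gbinom (α + j + 1) j * absorb
  refine ⟨value, fun hα => ?_⟩
  have hm : (0 : ℝ) ≤ m := m.cast_nonneg
  rw [value]
  refine mul_ne_zero (mul_ne_zero (by positivity) (gbinom_ne_zero fun i hi => ?_))
    (gbinom_ne_zero fun i _ => ?_)
  · have : (i : ℝ) < j := by exact_mod_cast hi
    linarith
  · have : (0 : ℝ) ≤ i := i.cast_nonneg
    linarith
end
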